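/- arXiv:2206.00444 — 5 statements merged into one kernel-verified Lean document; each statement's English description precedes it below -/
import Mathlib

section
/- Let Q be a quiver, M, N indecomposable representations of Q with Hom(N, M) = 0 and Ext¹(N, M) = 0. Then any nonzero morphism f : M → N is either injective or surjective. -/
/-!
STATEMENT 1: Let `Q` be a finite quiver without oriented cycles, `M`, `N` indecomposable
finite-dimensional representations of `Q` with `Hom(N, M) = 0` and `Ext¹(N, M) = 0`.
Then any nonzero morphism `f : M → N` is either injective or surjective.

We formalize representations of a quiver over a field `K` directly, `Hom(N,M) = 0` as the
vanishing of all morphisms `N → M`, and `Ext¹(N,M) = 0` as the statement that every short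
exact sequence of representations `0 → M → E → N → 0` splits.
-/

open Quiver

/-- A finite-dimensional representation of a quiver `V` over a field `K`. -/
structure QuivRep (K : Type) [Field K] (V : Type) [Quiver.{1} V] where
  M : V → Type
  [acg : ∀ i, AddCommGroup (M i)]
  [mod : ∀ i, Module K (M i)]
  [fin : ∀ i, FiniteDimensional K (M i)]
  f : ∀ {i j : V}, (i ⟶ j) → (M i →ₗ[K] M j)

attribute [instance] QuivRep.acg QuivRep.mod QuivRep.fin

/-- A morphism of quiver representations. -/
structure QuivRepHom {K : Type} [Field K] {V : Type} [Quiver.{1} V]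
    (X Y : QuivRep K V) where
  app : ∀ i, X.M i →ₗ[K] Y.M i
  comm : ∀ {i j : V} (a : i ⟶ j), (app j).comp (X.f a) = (Y.f a).comp (app i)

/-- A representation is indecomposable iff it is nonzero and its only idempotent
endomorphisms are `0` and `id`. -/
def QuivRep.Indecomposable {K : Type} [Field K] {V : Type} [Quiver.{1} V]
    (X : QuivRep K V) : Prop :=
  (∃ i, Nontrivial (X.M i)) ∧
  ∀ (e : QuivRepHom X X), (∀ i, (e.app i).comp (e.app i) = e.app i) →
    (∀ i, e.app i = 0) ∨ (∀ i, e.app i = LinearMap.id)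

section Aux

variable {K : Type} [Field K] {V : Type} [Quiver.{1} V]

lemma QuivRepHom.comm_apply {X Y : QuivRep K V} (g : QuivRepHom X Y) {i j : V}
    (a : i ⟶ j) (x : X.M i) : g.app j (X.f a x) = Y.f a (g.app i x) :=
  LinearMap.congr_fun (g.comm a) x

lemma QuivRepHom.pow_comm_apply {X : QuivRep K V} (g : QuivRepHom X X) {i j : V}
    (a : i ⟶ j) (n : ℕ) (x : X.M i) :
    (g.app j ^ n) (X.f a x) = X.f a ((g.app i ^ n) x) := by
  induction n with
  | zero => simp
  | succ n ih =>
    rw [pow_succ', Module.End.mul_apply, ih, g.comm_apply, ← Module.End.mul_apply,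
      ← pow_succ']

/-- Fitting's lemma for indecomposable representations. -/
theorem QuivRep.fitting [Fintype V] (X : QuivRep K V) (hX : X.Indecomposable)
    (g : QuivRepHom X X) :
    (∃ n, ∀ i, g.app i ^ n = 0) ∨ (∀ i, Function.Bijective (g.app i)) := by
  classical
  have hev : ∀ i : V, ∃ n₀, ∀ n ≥ n₀,
      IsCompl (LinearMap.ker (g.app i ^ n)) (LinearMap.range (g.app i ^ n)) := fun i =>
    Filter.eventually_atTop.mp (LinearMap.eventually_isCompl_ker_pow_range_pow (g.app i))
  choose n₀ hn₀ using hev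
  set n : ℕ := max 1 (Finset.univ.sup n₀) with hndef
  have hn1 : 1 ≤ n := le_max_left _ _
  have hc : ∀ i, IsCompl (LinearMap.ker (g.app i ^ n)) (LinearMap.range (g.app i ^ n)) :=
    fun i => hn₀ i n (le_trans (Finset.le_sup (Finset.mem_univ i)) (le_max_right _ _))
  set π : ∀ i, X.M i →ₗ[K] X.M i := fun i =>
    (LinearMap.range (g.app i ^ n)).subtype.comp
      (Submodule.projectionOnto _ _ (hc i).symm) with hπdef
  have hπ_ker : ∀ i x, x ∈ LinearMap.ker (g.app i ^ n) → π i x = 0 := by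
    intro i x hx
    simp [hπdef, Submodule.projectionOnto_apply_of_mem_right (hc i).symm hx]
  have hπ_range : ∀ i x, x ∈ LinearMap.range (g.app i ^ n) → π i x = x := by
    intro i x hx
    have := Submodule.projectionOnto_apply_of_mem_left (hc i).symm hx
    simp [hπdef, this]
  have hcomm : ∀ {i j : V} (a : i ⟶ j), (π j).comp (X.f a) = (X.f a).comp (π i) := by
    intro i j a
    ext x
    obtain ⟨u, v, hu, hv, rfl⟩ := Submodule.codisjoint_iff_exists_add_eq.mp (hc i).codisjoint x
    have h1 : X.f a u ∈ LinearMap.ker (g.app j ^ n) := by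
      rw [LinearMap.mem_ker, g.pow_comm_apply, LinearMap.mem_ker.mp hu, map_zero]
    have h2 : X.f a v ∈ LinearMap.range (g.app j ^ n) := by
      obtain ⟨w, rfl⟩ := hv
      exact ⟨X.f a w, g.pow_comm_apply a n w⟩
    simp only [LinearMap.comp_apply, map_add]
    rw [hπ_ker i u hu, hπ_range i v hv, hπ_ker j _ h1, hπ_range j _ h2]
    simp
  have hidem : ∀ i, (π i).comp (π i) = π i := by
    intro i
    ext x
    have hmem : π i x ∈ LinearMap.range (g.app i ^ n) := by
      simp only [hπdef, LinearMap.comp_apply]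
      exact ((Submodule.projectionOnto _ _ (hc i).symm) x).2
    simp only [LinearMap.comp_apply]
    exact hπ_range i _ hmem
  rcases hX.2 ⟨π, hcomm⟩ hidem with h0 | h1
  · left
    refine ⟨n, fun i => ?_⟩
    ext x
    have := hπ_range i ((g.app i ^ n) x) ⟨x, rfl⟩
    have h0' : π i = 0 := h0 i
    rw [h0'] at this
    simpa using this.symm
  · right
    intro i
    have hinj : Function.Injective (g.app i) := by
      rw [← LinearMap.ker_eq_bot, eq_bot_iff]
      intro x hx
      obtain ⟨k, hk⟩ := Nat.exists_eq_succ_of_ne_zero (by omega : n ≠ 0)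
      have hxn : x ∈ LinearMap.ker (g.app i ^ n) := by
        rw [LinearMap.mem_ker, hk, pow_succ, Module.End.mul_apply,
          LinearMap.mem_ker.mp hx, map_zero]
      have := hπ_ker i x hxn
      have h1' : π i = LinearMap.id := h1 i
      rw [h1'] at this
      simpa using this
    exact ⟨hinj, (LinearMap.injective_iff_surjective_of_finrank_eq_finrank rfl).mp hinj⟩

/-- The extension representation determined by a "cocycle" `c`. -/
@[reducible] def extRep (M N : QuivRep K V)
    (c : ∀ ⦃i j : V⦄, (i ⟶ j) → (N.M i →ₗ[K] M.M j)) : QuivRep K V where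
  M i := M.M i × N.M i
  acg i := inferInstance
  mod i := inferInstance
  fin i := inferInstance
  f {i j} a := ((M.f a).comp (LinearMap.fst K (M.M i) (N.M i)) +
      (c a).comp (LinearMap.snd K (M.M i) (N.M i))).prod
      ((N.f a).comp (LinearMap.snd K (M.M i) (N.M i)))

@[simp] lemma extRep_f {M N : QuivRep K V}
    {c : ∀ ⦃i j : V⦄, (i ⟶ j) → (N.M i →ₗ[K] M.M j)} {i j : V} (a : i ⟶ j)
    (x : M.M i × N.M i) :
    (extRep M N c).f a x = (M.f a x.1 + c a x.2, N.f a x.2) := rfl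


lemma extRep_inl_comm (M N : QuivRep K V)
    (c : ∀ ⦃i j : V⦄, (i ⟶ j) → (N.M i →ₗ[K] M.M j)) {i j : V} (a : i ⟶ j) :
    (LinearMap.inl K (M.M j) (N.M j)).comp (M.f a)
      = ((extRep M N c).f a).comp (LinearMap.inl K (M.M i) (N.M i)) := by
  apply LinearMap.ext
  intro m
  apply Prod.ext
  · show M.f a m = M.f a m + c a (0 : N.M i)
    rw [map_zero, add_zero]
  · show (0 : N.M j) = N.f a (0 : N.M i)
    rw [map_zero]

lemma extRep_snd_comm (M N : QuivRep K V)
    (c : ∀ ⦃i j : V⦄, (i ⟶ j) → (N.M i →ₗ[K] M.M j)) {i j : V} (a : i ⟶ j) :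
    (LinearMap.snd K (M.M j) (N.M j)).comp ((extRep M N c).f a)
      = (N.f a).comp (LinearMap.snd K (M.M i) (N.M i)) :=
  rfl

end Aux

theorem nonzero_hom_injective_or_surjective_of_hom_ext_vanish
    (K : Type) [Field K] (V : Type) [Quiver.{1} V] [Fintype V]
    (hacyclic : ∀ (i : V) (p : Quiver.Path i i), p = Quiver.Path.nil)
    (M N : QuivRep K V)
    (hM : M.Indecomposable) (hN : N.Indecomposable)
    -- Hom(N, M) = 0
    (hHom : ∀ (g : QuivRepHom N M) (i : V), g.app i = 0)
    -- Ext¹(N, M) = 0 : every extension of N by M splits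
    (hExt : ∀ (E : QuivRep K V) (ι : QuivRepHom M E) (π : QuivRepHom E N),
      (∀ i, Function.Injective (ι.app i)) →
      (∀ i, Function.Surjective (π.app i)) →
      (∀ i, LinearMap.range (ι.app i) = LinearMap.ker (π.app i)) →
      ∃ s : QuivRepHom N E, ∀ i, (π.app i).comp (s.app i) = LinearMap.id)
    (f : QuivRepHom M N) (hf : ∃ i, f.app i ≠ 0) :
    (∀ i, Function.Injective (f.app i)) ∨ (∀ i, Function.Surjective (f.app i)) := by
  classical
  -- choose a complement of the image and a section of f at each vertex
  choose compl hcompl using fun i => Submodule.exists_isCompl (LinearMap.range (f.app i))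
  choose σ hσ using fun i => LinearMap.exists_rightInverse_of_surjective
    (f.app i).rangeRestrict (LinearMap.range_rangeRestrict _)
  have hfσ : ∀ i (x : LinearMap.range (f.app i)), f.app i (σ i x) = (x : N.M i) := by
    intro i x
    have h1 := LinearMap.congr_fun (hσ i) x
    have h2 := congrArg Subtype.val h1
    simpa using h2
  -- data q, r with the three key properties
  obtain ⟨q, r, hA, hB, hC⟩ :
      ∃ (q : ∀ i, N.M i →ₗ[K] M.M i) (r : ∀ i, M.M i →ₗ[K] M.M i),
        (∀ i m, f.app i (r i m) = 0) ∧
        (∀ i m, q i (f.app i m) = m - r i m) ∧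
        (∀ i m, f.app i m = 0 → r i m = m) := by
    refine ⟨fun i => (σ i).comp (Submodule.projectionOnto _ _ (hcompl i)),
      fun i => LinearMap.id - (σ i).comp (f.app i).rangeRestrict, ?_, ?_, ?_⟩
    · intro i m
      simp [hfσ]
    · intro i m
      have hproj : Submodule.projectionOnto _ _ (hcompl i) (f.app i m)
          = (f.app i).rangeRestrict m := by
        have h := Submodule.projectionOnto_apply_left (hcompl i)
          ((f.app i).rangeRestrict m)
        simpa using h
      simp [hproj]
    · intro i m hm
      have hrr : (f.app i).rangeRestrict m = 0 := by
        ext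
        simpa using hm
      simp [hrr]
  -- the extension of N by M built from f, and its splitting
  obtain ⟨s, hs⟩ := hExt (extRep M N (fun i j a => (r j).comp ((M.f a).comp (q i))))
    ⟨fun i => LinearMap.inl K (M.M i) (N.M i), fun a => extRep_inl_comm M N _ a⟩
    ⟨fun i => LinearMap.snd K (M.M i) (N.M i), fun a => extRep_snd_comm M N _ a⟩
    (fun i => LinearMap.inl_injective)
    (fun i => LinearMap.snd_surjective)
    (fun i => LinearMap.range_inl K (M.M i) (N.M i))
  obtain ⟨h, hsapp⟩ : ∃ h : ∀ i, N.M i →ₗ[K] M.M i, ∀ i x, s.app i x = (h i x, x) := by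
    refine ⟨fun i => (LinearMap.fst K (M.M i) (N.M i)).comp (s.app i), fun i x => ?_⟩
    exact Prod.ext rfl (LinearMap.congr_fun (hs i) x)
  -- the splitting identity
  have hstar : ∀ {i j : V} (a : i ⟶ j) (x : N.M i),
      h j (N.f a x) = M.f a (h i x) + r j (M.f a (q i x)) := by
    intro i j a x
    have h1 := LinearMap.congr_fun (s.comm a) x
    simp only [LinearMap.comp_apply, hsapp, extRep_f, LinearMap.prod_apply, Function.prod,
      LinearMap.add_apply, LinearMap.fst_apply, LinearMap.snd_apply, Prod.mk.injEq] at h1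
    exact h1.1
  -- endomorphism Φ of M and e of N
  have hrstab : ∀ {i j : V} (a : i ⟶ j) (m : M.M i),
      r j (M.f a (r i m)) = M.f a (r i m) := by
    intro i j a m
    refine hC j _ ?_
    rw [f.comm_apply, hA, map_zero]
  let Φ : QuivRepHom M M := ⟨fun i => r i - (h i).comp (f.app i), by
    intro i j a
    ext m
    simp only [LinearMap.comp_apply, LinearMap.sub_apply]
    rw [f.comm_apply, hstar, hB]
    simp only [map_sub, hrstab]
    abel⟩
  let e : QuivRepHom N N := ⟨fun i => (f.app i).comp (h i), by
    intro i j a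
    ext x
    simp only [LinearMap.comp_apply]
    rw [hstar, map_add, hA, add_zero, f.comm_apply]⟩
  have hΦapp : ∀ i m, Φ.app i m = r i m - h i (f.app i m) := fun i m => rfl
  have heapp : ∀ i x, e.app i x = f.app i (h i x) := fun i x => rfl
  have key1 : ∀ i m, f.app i (Φ.app i m) = - e.app i (f.app i m) := by
    intro i m
    rw [hΦapp, heapp, map_sub, hA, zero_sub]
  have key2 : ∀ i m, f.app i m = 0 → Φ.app i m = m := by
    intro i m hm
    rw [hΦapp, hm, map_zero, sub_zero, hC i m hm]
  rcases QuivRep.fitting M hM Φ with ⟨n, hn⟩ | hΦbij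
  · -- Φ nilpotent : f is injective
    left
    intro i
    rw [← LinearMap.ker_eq_bot, eq_bot_iff]
    intro m hm
    rw [LinearMap.mem_ker] at hm
    have hfix : ∀ k, (Φ.app i ^ k) m = m := by
      intro k
      induction k with
      | zero => simp
      | succ k ih => rw [pow_succ', Module.End.mul_apply, ih, key2 i m hm]
    have := hfix n
    rw [hn i] at this
    simpa using this.symm
  · rcases QuivRep.fitting N hN e with ⟨n, hn⟩ | hebij
    · -- e nilpotent and Φ bijective : f = 0, contradiction
      exfalso
      obtain ⟨i, hne⟩ := hf
      apply hne
      have hsur : ∀ k, Function.Surjective (⇑(Φ.app i ^ k)) := by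
        intro k
        induction k with
        | zero => intro y; exact ⟨y, by simp⟩
        | succ k ih =>
          intro y
          obtain ⟨w, hw⟩ := ih y
          obtain ⟨x, hx⟩ := (hΦbij i).2 w
          exact ⟨x, by rw [pow_succ, Module.End.mul_apply, hx, hw]⟩
      have hkey : ∀ k m, f.app i ((Φ.app i ^ k) m)
          = ((-1 : K) ^ k) • ((e.app i ^ k) (f.app i m)) := by
        intro k
        induction k with
        | zero => intro m; simp
        | succ k ih =>
          intro m
          rw [pow_succ, Module.End.mul_apply, ih (Φ.app i m), key1, map_neg, smul_neg,
            pow_succ (e.app i) k, Module.End.mul_apply (e.app i ^ k) (e.app i),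
            pow_succ (-1 : K) k, mul_comm ((-1 : K) ^ k), mul_smul, neg_one_smul]
      ext m
      obtain ⟨w, hw⟩ := hsur n m
      rw [← hw, hkey n w, hn i]
      simp
    · -- e bijective : f is surjective
      right
      intro i y
      obtain ⟨x, hx⟩ := (hebij i).2 y
      exact ⟨h i x, hx⟩
end

section
/- Any rigid indecomposable module over a hereditary finite-dimensional algebra is a brick, i.e., if M is indecomposable and Ext¹(M,M) = 0, then End(M) is one-dimensional over the base field. -/
/-!
STATEMENT 2: Any rigid indecomposable module over a hereditary finite-dimensional algebra
is a brick: if `M` is indecomposable and `Ext¹(M,M) = 0`, then `End(M)` is one-dimensional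
over the base field.

`A` is a finite-dimensional algebra over an algebraically closed field `k`; hereditary means
every submodule of a projective module is projective; `Ext¹` is the categorical `Ext` of
`ModuleCat A` (a `k`-linear abelian category with enough projectives).
-/

open CategoryTheory
open CategoryTheory Limits

/-- Fitting dichotomy: an endomorphism of an indecomposable finite module is
bijective or nilpotent. -/
lemma fitting_dichotomy (k : Type) [Field k] (A : Type) [Ring A] [Algebra k A]
    [FiniteDimensional k A]
    (M : Type) [AddCommGroup M] [Module A M] [Module.Finite A M]
    (hind : ∀ p q : Submodule A M, IsCompl p q → p = ⊥ ∨ q = ⊥)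
    (f : M →ₗ[A] M) : Function.Bijective f ∨ IsNilpotent f := by
  letI : Module k M := Module.compHom M (algebraMap k A)
  haveI : IsScalarTower k A M := ⟨fun x a m => by
    show (x • a) • m = algebraMap k A x • (a • m)
    rw [Algebra.smul_def, mul_smul]⟩
  haveI : Module.Finite k M := Module.Finite.trans A M
  haveI : IsNoetherian A M := isNoetherian_of_tower k inferInstance
  haveI : IsArtinian A M := isArtinian_of_tower k inferInstance
  obtain ⟨N, hN⟩ := Filter.eventually_atTop.mp (f.eventually_isCompl_ker_pow_range_pow)
  have hc := hN (N + 1) (Nat.le_succ N)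
  rcases hind _ _ hc with h | h
  · left
    have hinj : Function.Injective (f ^ (N + 1) : M →ₗ[A] M) := by
      rw [← LinearMap.ker_eq_bot]; exact h
    have hsurj : Function.Surjective (f ^ (N + 1) : M →ₗ[A] M) := by
      rw [← LinearMap.range_eq_top]
      have := hc.codisjoint.symm
      rw [h] at this
      exact codisjoint_bot.mp this
    constructor
    · intro x y hxy
      apply hinj
      simp only [Module.End.pow_apply, Function.iterate_succ_apply, hxy]
    · intro y
      obtain ⟨x, hx⟩ := hsurj y
      exact ⟨(f ^ N) x, by
        simpa [Module.End.pow_apply, Function.iterate_succ_apply'] using hx⟩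
  · right
    exact ⟨N + 1, by rwa [LinearMap.range_eq_bot] at h⟩

/-- Happel–Ringel core: under the splitting property coming from rigidity, plus
hereditariness, every nonzero endomorphism of an indecomposable module is surjective. -/
lemma hr_core (k : Type) [Field k] (A : Type) [Ring A] [Algebra k A]
    [FiniteDimensional k A]
    (hhered : ∀ (P : Type) [AddCommGroup P] [Module A P], Module.Projective A P →
      ∀ N : Submodule A P, Module.Projective A N)
    (M : Type) [AddCommGroup M] [Module A M] [Module.Finite A M]
    (hind : ∀ p q : Submodule A M, IsCompl p q → p = ⊥ ∨ q = ⊥)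
    (hsplit : ∀ (X : Type) [AddCommGroup X] [Module A X] (u : M →ₗ[A] X) (v : X →ₗ[A] M),
      Function.Injective u → Function.Surjective v →
      LinearMap.ker v = LinearMap.range u →
      ∃ r : X →ₗ[A] M, r ∘ₗ u = LinearMap.id)
    (φ : M →ₗ[A] M) (hφ : φ ≠ 0) : Function.Surjective φ := by
  letI : Module k M := Module.compHom M (algebraMap k A)
  haveI : IsScalarTower k A M := ⟨fun x a m => by
    show (x • a) • m = algebraMap k A x • (a • m)
    rw [Algebra.smul_def, mul_smul]⟩
  haveI : Module.Finite k M := Module.Finite.trans A M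
  by_contra hns
  -- the image of φ
  set I : Submodule A M := LinearMap.range φ with hI
  -- the quotient C = M / I and a free cover of it
  set c : M →ₗ[A] M ⧸ I := I.mkQ with hc
  obtain ⟨n, q, hq⟩ := Module.Finite.exists_fin' A (M ⧸ I)
  set S : Submodule A (Fin n → A) := LinearMap.ker q with hS
  haveI hSproj : Module.Projective A S := hhered (Fin n → A) inferInstance S
  -- lift the free cover along c
  obtain ⟨w, hw⟩ := Module.projective_lifting_property c q (Submodule.mkQ_surjective I)
  -- the corestriction g of φ onto its image
  set g : M →ₗ[A] I := φ.rangeRestrict with hg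
  have hgsurj : Function.Surjective g := LinearMap.surjective_rangeRestrict φ
  -- w maps S into I
  have hwS : ∀ s : S, w s ∈ I := by
    intro s
    have : c (w s) = q s := by rw [← hw]; rfl
    have h0 : q (s : Fin n → A) = 0 := s.2
    rw [h0] at this
    simpa [hc, Submodule.Quotient.mk_eq_zero] using
      (Submodule.Quotient.mk_eq_zero I).mp this
  set w' : S →ₗ[A] I := LinearMap.codRestrict I (w ∘ₗ S.subtype) hwS with hw'
  -- lift w' along g using projectivity of S
  obtain ⟨σ, hσ⟩ := Module.projective_lifting_property g w' hgsurj
  have hσ' : ∀ s : S, φ (σ s) = w s := by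
    intro s
    have := congrArg (fun (t : S →ₗ[A] I) => ((t s : I) : M)) hσ
    exact this
  -- the pushout E = (F × M) / D
  set δ : S →ₗ[A] (Fin n → A) × M := S.subtype.prod (-σ) with hδ
  set D : Submodule A ((Fin n → A) × M) := LinearMap.range δ with hD
  set π : ((Fin n → A) × M) →ₗ[A] (((Fin n → A) × M) ⧸ D) := D.mkQ with hπ
  set α : M →ₗ[A] (((Fin n → A) × M) ⧸ D) := π ∘ₗ LinearMap.inr A (Fin n → A) M with hα
  have hαinj : Function.Injective α := by
    intro m₁ m₂ h12
    have hmem : ((0 : Fin n → A), m₁ - m₂) ∈ D := by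
      have h0 : π ((0, m₁) - (0, m₂)) = 0 := by
        simp only [map_sub]
        rw [show π (0, m₁) = α m₁ from rfl, show π (0, m₂) = α m₂ from rfl, h12, sub_self]
      have h2 := (Submodule.Quotient.mk_eq_zero D).mp h0
      simpa using h2
    obtain ⟨s, hs⟩ := LinearMap.mem_range.mp hmem
    have hs1 : (s : Fin n → A) = 0 := congrArg Prod.fst hs
    have hs0 : s = 0 := Subtype.ext hs1
    have hs2 : -σ s = m₁ - m₂ := congrArg Prod.snd hs
    rw [hs0] at hs2
    simp only [map_zero, neg_zero] at hs2
    exact sub_eq_zero.mp hs2.symm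
  -- the map h : E → M
  have hDh : D ≤ LinearMap.ker ((w ∘ₗ LinearMap.fst A (Fin n → A) M)
      + (φ ∘ₗ LinearMap.snd A (Fin n → A) M)) := by
    rintro x ⟨s, rfl⟩
    simp only [LinearMap.mem_ker, LinearMap.add_apply, LinearMap.coe_comp,
      Function.comp_apply, hδ, LinearMap.prod_apply, Function.prod, LinearMap.fst_apply,
      LinearMap.snd_apply, LinearMap.neg_apply, map_neg]
    rw [hσ' s]
    simp
  set h : (((Fin n → A) × M) ⧸ D) →ₗ[A] M := D.liftQ _ hDh with hh
  have hhπ : ∀ (f : Fin n → A) (m : M), h (π (f, m)) = w f + φ m := by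
    intro f m; rfl
  have hhα : ∀ m : M, h (α m) = φ m := by
    intro m
    have : h (π (0, m)) = w 0 + φ m := hhπ 0 m
    simp only [map_zero, zero_add] at this
    exact this
  -- shifting representatives by elements of S
  have hshift : ∀ (s : S) (m : M), π ((s : Fin n → A), m) = α (m + σ s) := by
    intro s m
    show Submodule.Quotient.mk _ = Submodule.Quotient.mk _
    rw [Submodule.Quotient.eq]
    exact ⟨s, by simp [hδ]⟩
  -- the Mayer–Vietoris short exact sequence  0 → M → E × I → M → 0
  set E := ((Fin n → A) × M) ⧸ D with hE
  set u : M →ₗ[A] E × I := α.prod g with hu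
  set v : E × I →ₗ[A] M := (h ∘ₗ LinearMap.fst A E I) - (I.subtype ∘ₗ LinearMap.snd A E I)
    with hv
  have hvap : ∀ (x : E) (i : I), v (x, i) = h x - i := fun x i => rfl
  have hvu : ∀ m : M, v (u m) = 0 := by
    intro m
    have : v (α m, g m) = h (α m) - φ m := hvap (α m) (g m)
    rw [hhα] at this
    rw [sub_self] at this
    exact this
  have huinj : Function.Injective u := by
    intro m₁ m₂ h12
    exact hαinj (congrArg Prod.fst h12)
  have hvsurj : Function.Surjective v := by
    intro m
    obtain ⟨f, hf⟩ := hq (c m)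
    have hmem : w f - m ∈ I := by
      have h1 : c (w f) = q f := by rw [← hw]; rfl
      have h2 : c (w f - m) = 0 := by rw [map_sub, h1, hf, sub_self]
      exact (Submodule.Quotient.mk_eq_zero I).mp h2
    refine ⟨(π (f, 0), ⟨w f - m, hmem⟩), ?_⟩
    rw [hvap, hhπ]
    simp
  have hker : LinearMap.ker v = LinearMap.range u := by
    apply le_antisymm
    · rintro ⟨x, i⟩ hx
      rw [LinearMap.mem_ker, hvap] at hx
      have hxi : h x = (i : M) := sub_eq_zero.mp hx
      obtain ⟨⟨f, m⟩, rfl⟩ := Submodule.mkQ_surjective D x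
      have hxfm : h (π (f, m)) = w f + φ m := hhπ f m
      have hwf : w f ∈ I := by
        have : w f = (i : M) - φ m := by
          rw [← hxi]
          show w f = h (π (f,m)) - φ m
          rw [hxfm]; abel
        rw [this]
        exact sub_mem i.2 (LinearMap.mem_range_self φ m)
      have hqf : q f = 0 := by
        have h1 : c (w f) = q f := by rw [← hw]; rfl
        rw [← h1, hc]
        exact (Submodule.Quotient.mk_eq_zero I).mpr hwf
      set s : S := ⟨f, hqf⟩ with hsdef
      refine ⟨m + σ s, ?_⟩
      have hfst : α (m + σ s) = π (f, m) := (hshift s m).symm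
      have hφms : φ (m + σ s) = w f + φ m := by
        rw [map_add, hσ' s]
        show φ m + w f = w f + φ m
        abel
      have hsnd : g (m + σ s) = i := by
        apply Subtype.ext
        show φ (m + σ s) = (i : M)
        rw [hφms, ← hxfm, hxi]
      show (α (m + σ s), g (m + σ s)) = (π (f, m), i)
      rw [hfst, hsnd]
    · rintro y ⟨m, rfl⟩
      exact LinearMap.mem_ker.mpr (hvu m)
  -- apply the splitting hypothesis
  obtain ⟨r, hr⟩ := hsplit (E × I) u v huinj hvsurj hker
  set r₁ : E →ₗ[A] M := r ∘ₗ LinearMap.inl A E I with hr₁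
  set r₂ : I →ₗ[A] M := r ∘ₗ LinearMap.inr A E I with hr₂
  have key : ∀ m : M, r₁ (α m) + r₂ (g m) = m := by
    intro m
    have h1 : ((α m, g m) : E × I) = (α m, 0) + (0, g m) := by simp
    have h2 : r (u m) = m := by simpa using LinearMap.congr_fun hr m
    calc r₁ (α m) + r₂ (g m) = r ((α m, 0) + (0, g m)) := by rw [map_add]; rfl
    _ = r (u m) := by rw [← h1]; rfl
    _ = m := h2
  set χ : M →ₗ[A] M := r₂ ∘ₗ g with hχdef
  have hχnb : ¬ Function.Bijective χ := by
    intro hb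
    have hginj : Function.Injective g := by
      have : Function.Injective (r₂ ∘ g) := by
        have : Function.Injective χ := hb.1
        exact this
      exact Function.Injective.of_comp this
    have hφinj : Function.Injective φ := by
      intro x y hxy
      apply hginj
      apply Subtype.ext
      exact hxy
    have hφsurj : Function.Surjective φ := by
      have := (LinearMap.injective_iff_surjective
        (f := (φ.restrictScalars k : M →ₗ[k] M))).mp hφinj
      exact this
    exact hns hφsurj
  have hnil : IsNilpotent χ := by
    rcases fitting_dichotomy k A M hind χ with hb | hn
    · exact absurd hb hχnb
    · exact hn
  have hψunit : IsUnit ((1 : Module.End A M) - χ) := hnil.isUnit_one_sub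
  have hψ : (1 : Module.End A M) - χ = r₁ ∘ₗ α := by
    ext m
    have := key m
    show m - χ m = r₁ (α m)
    have hχm : χ m = r₂ (g m) := rfl
    rw [hχm]
    exact (eq_sub_of_add_eq (key m)).symm
  obtain ⟨uψ, huψ⟩ := hψunit
  set ρ : E →ₗ[A] M := (↑uψ⁻¹ : Module.End A M) ∘ₗ r₁ with hρdef
  have hρ : ∀ m : M, ρ (α m) = m := by
    intro m
    show (↑uψ⁻¹ : Module.End A M) (r₁ (α m)) = m
    have h1 : r₁ (α m) = ((1 : Module.End A M) - χ) m := by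
      rw [hψ]; rfl
    rw [h1, ← huψ]
    have h2 : ((↑uψ⁻¹ * ↑uψ : Module.End A M)) m = m := by
      rw [uψ.inv_mul]; rfl
    exact h2
  -- the retraction of the inclusion I → M
  set ξ : E × I →ₗ[A] I := (g ∘ₗ ρ ∘ₗ LinearMap.fst A E I) - LinearMap.snd A E I with hξdef
  have hξap : ∀ (x : E) (i : I), ξ (x, i) = g (ρ x) - i := fun x i => rfl
  have hle : LinearMap.ker v ≤ LinearMap.ker ξ := by
    rw [hker]
    rintro y ⟨m, rfl⟩
    rw [LinearMap.mem_ker]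
    show ξ (α m, g m) = 0
    rw [hξap, hρ, sub_self]
  set eqv := v.quotKerEquivOfSurjective hvsurj with heqv
  have heqvmk : ∀ x : E × I, eqv (Submodule.Quotient.mk x) = v x := fun x => rfl
  set r' : M →ₗ[A] I := ((LinearMap.ker v).liftQ ξ hle) ∘ₗ
    (eqv.symm : M →ₗ[A] (E × I) ⧸ LinearMap.ker v) with hr'def
  have hr'v : ∀ x : E × I, r' (v x) = ξ x := by
    intro x
    have h1 : eqv.symm (v x) = Submodule.Quotient.mk x := by
      apply eqv.injective
      rw [LinearEquiv.apply_symm_apply, heqvmk]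
    show ((LinearMap.ker v).liftQ ξ hle) (eqv.symm (v x)) = ξ x
    rw [h1]
    exact Submodule.liftQ_apply _ _ _
  have hr'I : ∀ i : I, r' (i : M) = i := by
    intro i
    have h1 : v (0, -i) = (i : M) := by
      rw [hvap]
      simp
    have h2 : ξ ((0 : E), -i) = i := by
      rw [hξap]
      simp
    rw [← h1, hr'v, h2]
  -- I and ker r' are complementary
  set K' : Submodule A M := LinearMap.ker r' with hK'
  have hcompl : IsCompl I K' := by
    constructor
    · rw [disjoint_iff]
      ext x
      simp only [Submodule.mem_inf, Submodule.mem_bot]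
      constructor
      · rintro ⟨hxI, hxK⟩
        have := hr'I ⟨x, hxI⟩
        rw [LinearMap.mem_ker.mp hxK] at this
        have := congrArg (Subtype.val) this
        simpa using this.symm
      · rintro rfl
        exact ⟨zero_mem I, zero_mem K'⟩
    · rw [codisjoint_iff, Submodule.eq_top_iff']
      intro m
      rw [Submodule.mem_sup]
      refine ⟨(r' m : M), (r' m).2, m - (r' m : M), ?_, by abel⟩
      rw [hK', LinearMap.mem_ker, map_sub, hr'I, sub_self]
  rcases hind I K' hcompl with hbot | hbot
  · apply hφ
    rw [← LinearMap.range_eq_bot]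
    exact hbot
  · apply hns
    rw [← LinearMap.range_eq_top]
    rw [Submodule.eq_top_iff']
    intro m
    have : m - (r' m : M) ∈ K' := by
      rw [hK', LinearMap.mem_ker, map_sub, hr'I, sub_self]
    rw [hbot, Submodule.mem_bot, sub_eq_zero] at this
    rw [this]
    exact (r' m).2

/-- From the concrete rigidity property (every map from the syzygy extends),
every self-extension of `M` splits. -/
lemma split_of_lift (A : Type) [Ring A]
    (M : Type) [AddCommGroup M] [Module A M]
    (F : Type) [AddCommGroup F] [Module A F] [Module.Projective A F]
    (p : F →ₗ[A] M) (hp : Function.Surjective p)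
    (hext : ∀ θ : (LinearMap.ker p) →ₗ[A] M, ∃ Θ : F →ₗ[A] M,
      Θ ∘ₗ (LinearMap.ker p).subtype = θ)
    (X : Type) [AddCommGroup X] [Module A X] (u : M →ₗ[A] X) (v : X →ₗ[A] M)
    (hu : Function.Injective u) (hv : Function.Surjective v)
    (hker : LinearMap.ker v = LinearMap.range u) :
    ∃ r : X →ₗ[A] M, r ∘ₗ u = LinearMap.id := by
  obtain ⟨pt, hpt⟩ := Module.projective_lifting_property v p hv
  set S := LinearMap.ker p with hS
  set e : M ≃ₗ[A] LinearMap.range u := LinearEquiv.ofInjective u hu with he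
  have heap : ∀ m : M, ((e m : X)) = u m := fun m => rfl
  have hesymm : ∀ y : LinearMap.range u, u (e.symm y) = (y : X) := by
    intro y
    have := heap (e.symm y)
    rw [e.apply_symm_apply] at this
    exact this.symm
  have hptS : ∀ s : S, pt (s : F) ∈ LinearMap.range u := by
    intro s
    rw [← hker, LinearMap.mem_ker]
    have : v (pt (s : F)) = p (s : F) := LinearMap.congr_fun hpt (s : F)
    rw [this]
    exact s.2
  set θ : S →ₗ[A] M := e.symm.toLinearMap ∘ₗ
    LinearMap.codRestrict (LinearMap.range u) (pt ∘ₗ S.subtype) hptS with hθ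
  have hθap : ∀ s : S, u (θ s) = pt (s : F) := by
    intro s
    show u (e.symm ⟨pt (s : F), hptS s⟩) = pt (s : F)
    rw [hesymm]
  obtain ⟨Θ, hΘ⟩ := hext θ
  set d : F →ₗ[A] X := pt - u ∘ₗ Θ with hd
  have hle : LinearMap.ker p ≤ LinearMap.ker d := by
    intro x hx
    rw [LinearMap.mem_ker]
    show pt x - u (Θ x) = 0
    have h1 : Θ x = θ ⟨x, hx⟩ := LinearMap.congr_fun hΘ ⟨x, hx⟩
    rw [h1, hθap ⟨x, hx⟩, sub_self]
  set eqv := p.quotKerEquivOfSurjective hp with heqv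
  have heqvmk : ∀ x : F, eqv (Submodule.Quotient.mk x) = p x := fun x => rfl
  set s₀ : M →ₗ[A] X := ((LinearMap.ker p).liftQ d hle) ∘ₗ
    (eqv.symm : M →ₗ[A] F ⧸ LinearMap.ker p) with hs₀def
  have hs₀ : ∀ f : F, s₀ (p f) = d f := by
    intro f
    have h1 : eqv.symm (p f) = Submodule.Quotient.mk f := by
      apply eqv.injective
      rw [LinearEquiv.apply_symm_apply, heqvmk]
    show ((LinearMap.ker p).liftQ d hle) (eqv.symm (p f)) = d f
    rw [h1]
    exact Submodule.liftQ_apply _ _ _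
  have hvu : ∀ m : M, v (u m) = 0 := by
    intro m
    rw [← LinearMap.mem_ker, hker]
    exact LinearMap.mem_range_self u m
  have hvs₀ : ∀ m : M, v (s₀ m) = m := by
    intro m
    obtain ⟨f, rfl⟩ := hp m
    rw [hs₀]
    show v (pt f - u (Θ f)) = p f
    rw [map_sub, hvu, sub_zero]
    exact LinearMap.congr_fun hpt f
  have hmem : ∀ x : X, x - s₀ (v x) ∈ LinearMap.range u := by
    intro x
    rw [← hker, LinearMap.mem_ker, map_sub, hvs₀, sub_self]
  set r : X →ₗ[A] M := e.symm.toLinearMap ∘ₗ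
    LinearMap.codRestrict (LinearMap.range u) (LinearMap.id - s₀ ∘ₗ v) hmem with hr
  refine ⟨r, ?_⟩
  ext m
  show e.symm ⟨u m - s₀ (v (u m)), _⟩ = m
  have h1 : u m - s₀ (v (u m)) = u m := by
    rw [hvu, map_zero, sub_zero]
  apply hu
  rw [hesymm ⟨u m - s₀ (v (u m)), _⟩]
  exact h1


open CategoryTheory Limits

/-- From categorical rigidity, the concrete lifting property for a syzygy of `M`. -/
lemma ext_lifting (k : Type) [Field k] (A : Type) [Ring A] [Algebra k A]
    (M : ModuleCat.{0} A)
    (n : ℕ) (p : (Fin n → A) →ₗ[A] M) (hp : Function.Surjective p)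
    (hSproj : Module.Projective A (LinearMap.ker p))
    (hrigid : Subsingleton (((Ext k (ModuleCat.{0} A) 1).obj (Opposite.op M)).obj M)) :
    ∀ θ : (LinearMap.ker p) →ₗ[A] M, ∃ Θ : (Fin n → A) →ₗ[A] M,
      Θ ∘ₗ (LinearMap.ker p).subtype = θ := by
  classical
  set S := LinearMap.ker p with hS
  -- the chain complex  ... → 0 → S → A^n
  let Xf : ℕ → ModuleCat.{0} A := fun i => match i with
    | 0 => ModuleCat.of A (Fin n → A)
    | 1 => ModuleCat.of A S
    | _+2 => ModuleCat.of A PUnit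
  let df : ∀ i, Xf (i+1) ⟶ Xf i := fun i => match i with
    | 0 => (ModuleCat.ofHom S.subtype : ModuleCat.of A S ⟶ ModuleCat.of A (Fin n → A))
    | 1 => 0
    | _+2 => 0
  have hsq : ∀ i, df (i+1) ≫ df i = 0 := by
    rintro (_|_|i)
    · show (0 : Xf 2 ⟶ Xf 1) ≫ _ = 0; simp
    · show (0 : Xf 3 ⟶ Xf 2) ≫ _ = 0; simp
    · show (0 : Xf (i+4) ⟶ Xf (i+3)) ≫ _ = 0; simp
  let K : ChainComplex (ModuleCat.{0} A) ℕ := ChainComplex.of Xf df hsq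
  have hKX : ∀ i, K.X i = Xf i := fun _ => rfl
  have hKd : ∀ i, K.d (i+1) i = df i := fun i => ChainComplex.of_d Xf df i
  haveI hproj : ∀ i, Projective (K.X i) := by
    rintro (_|_|i)
    · exact (IsProjective.iff_projective (Fin n → A)).mp inferInstance
    · exact (IsProjective.iff_projective S).mp hSproj
    · exact (IsProjective.iff_projective PUnit).mp inferInstance
  -- the augmentation map
  have hd10 : K.d 1 0 = df 0 := hKd 0
  have hdp : K.d 1 0 ≫ (ModuleCat.ofHom p : ModuleCat.of A (Fin n → A) ⟶ M) = 0 := by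
    rw [hd10]
    ext s
    exact s.2
  let π : K ⟶ (ChainComplex.single₀ (ModuleCat.{0} A)).obj M :=
    (ChainComplex.toSingle₀Equiv K M).symm ⟨(ModuleCat.ofHom p : ModuleCat.of A (Fin n → A) ⟶ M), hdp⟩
  have hπ0 : π.f 0 = (ModuleCat.ofHom p : ModuleCat.of A (Fin n → A) ⟶ M) :=
    ChainComplex.toSingle₀Equiv_symm_apply_f_zero _ _
  -- exactness in positive degrees
  have hexactK : ∀ i, K.ExactAt (i + 1) := by
    intro i
    rw [HomologicalComplex.exactAt_iff' K (i+2) (i+1) i (by simp) (by simp)]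
    match i with
    | 0 =>
      rw [ShortComplex.moduleCat_exact_iff]
      intro x hx
      refine ⟨0, ?_⟩
      have hx0 : x = (0 : ModuleCat.of A S) := by
        have h1 : (K.d 1 0) x = 0 := hx
        rw [hd10] at h1
        exact Subtype.ext h1
      rw [hx0, map_zero]
      rfl
    | (j+1) =>
      have hz : IsZero (K.X (j+1+1)) := by
        show IsZero (ModuleCat.of A PUnit)
        exact ModuleCat.isZero_of_subsingleton _
      exact ShortComplex.exact_of_isZero_X₂ _ hz
  -- π is a quasi-isomorphism
  haveI hqis : QuasiIso π := by
    constructor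
    intro i
    cases i with
    | zero =>
      rw [ChainComplex.quasiIsoAt₀_iff, ShortComplex.quasiIso_iff_of_zeros']
      · constructor
        · rw [ShortComplex.moduleCat_exact_iff]
          intro x hx
          have hx' : p x = 0 := by
            have h1 : (π.f 0) x = 0 := hx
            rw [hπ0] at h1
            exact h1
          refine ⟨(⟨x, hx'⟩ : S), ?_⟩
          show (K.d 1 0) _ = x
          rw [hd10]
          rfl
        · show Epi (π.f 0)
          rw [ModuleCat.epi_iff_surjective, hπ0]
          exact hp
      · exact K.shape 0 0 (by simp)
      · rfl
      · rfl
    | succ i =>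
      exact (quasiIsoAt_iff_exactAt' π (i+1)
        (ChainComplex.exactAt_succ_single_obj M i)).mpr (hexactK i)
  -- assemble the projective resolution
  let P : CategoryTheory.ProjectiveResolution M :=
    { complex := K, projective := hproj, π := π, quasiIso := hqis }
  -- rigidity kills the first homology of the Yoneda complex
  set L := K.linearYonedaObj k M with hL
  have hz : IsZero (((Ext k (ModuleCat.{0} A) 1).obj (Opposite.op M)).obj M) :=
    ModuleCat.isZero_of_subsingleton _
  have hzh : IsZero (L.homology 1) := hz.of_iso (P.isoExt 1 M).symm
  have hex : L.ExactAt 1 := (HomologicalComplex.exactAt_iff_isZero_homology L 1).mpr hzh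
  rw [HomologicalComplex.exactAt_iff' L 0 1 2 (by simp) (by simp),
    ShortComplex.moduleCat_exact_iff] at hex
  intro θ
  haveI hssX : Subsingleton (K.X 2) := by
    show Subsingleton PUnit
    infer_instance
  haveI hss : Subsingleton (K.X 2 ⟶ M) := by
    constructor
    intro f g
    ext x
    have hx : x = (0 : K.X 2) := Subsingleton.elim _ _
    rw [hx, map_zero, map_zero]
  have hgz : ∀ y : (L.sc' 0 1 2).X₂, (L.sc' 0 1 2).g y = 0 := by
    intro y
    have : Subsingleton ((L.sc' 0 1 2).X₃) := by
      show Subsingleton (K.X 2 ⟶ M)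
      infer_instance
    exact Subsingleton.elim _ _
  obtain ⟨Θ, hΘ⟩ := hex (show (ModuleCat.of A S ⟶ M) from ModuleCat.ofHom θ) (hgz _)
  refine ⟨Θ.hom, ?_⟩
  have h2 : (L.d 0 1) Θ = ModuleCat.ofHom θ := hΘ
  rw [ChainComplex.linearYonedaObj_d] at h2
  have h3 : K.d 1 0 ≫ Θ = ModuleCat.ofHom θ := h2
  rw [hd10] at h3
  exact congrArg ModuleCat.Hom.hom h3


theorem rigid_indecomposable_is_brick
    (k : Type) [Field k] [IsAlgClosed k]
    (A : Type) [Ring A] [Algebra k A] [FiniteDimensional k A]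
    -- `A` is hereditary: submodules of projective modules are projective
    (hhered : ∀ (P : Type) [AddCommGroup P] [Module A P], Module.Projective A P →
      ∀ N : Submodule A P, Module.Projective A N)
    (M : ModuleCat.{0} A) [Module.Finite A M]
    -- `M` is indecomposable
    (hM : Nontrivial M ∧ ∀ p q : Submodule A M, IsCompl p q → p = ⊥ ∨ q = ⊥)
    -- `M` is rigid : Ext¹(M, M) = 0
    (hrigid : Subsingleton (((Ext k (ModuleCat.{0} A) 1).obj (Opposite.op M)).obj M)) :
    Module.finrank k (M ⟶ M) = 1 := by
  obtain ⟨hnt, hind⟩ := hM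
  haveI : Nontrivial (↥M) := hnt
  -- a free cover of M and its syzygy
  obtain ⟨n, p, hp⟩ := Module.Finite.exists_fin' A (↥M)
  have hSproj : Module.Projective A (LinearMap.ker p) :=
    hhered (Fin n → A) inferInstance (LinearMap.ker p)
  -- rigidity gives the lifting property for the syzygy
  have hext := ext_lifting k A M n p hp hSproj hrigid
  -- hence every self-extension of M splits
  have hsplit : ∀ (X : Type) [AddCommGroup X] [Module A X] (u : ↥M →ₗ[A] X)
      (v : X →ₗ[A] ↥M), Function.Injective u → Function.Surjective v →
      LinearMap.ker v = LinearMap.range u →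
      ∃ r : X →ₗ[A] ↥M, r ∘ₗ u = LinearMap.id := by
    intro X _ _ u v hu hv hk
    exact split_of_lift A (↥M) (Fin n → A) p hp hext X u v hu hv hk
  -- every nonzero endomorphism is surjective
  have hsurj : ∀ φ : (↥M) →ₗ[A] (↥M), φ ≠ 0 → Function.Surjective φ := fun φ hφ =>
    hr_core k A hhered (↥M) hind hsplit φ hφ
  -- the k-module structure on M
  letI : Module k (↥M) := ModuleCat.moduleOfAlgebraModule M
  letI : IsScalarTower k A (↥M) := ModuleCat.isScalarTower_of_algebra_moduleCat M
  haveI : Module.Finite k (↥M) := Module.Finite.trans A (↥M)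
  -- every nonzero endomorphism is bijective
  have hbij : ∀ f : M ⟶ M, f ≠ 0 → Function.Bijective f := by
    intro f hf
    have hs : Function.Surjective f := hsurj f.hom (fun h => hf (ModuleCat.hom_ext (by rw [h, ModuleCat.hom_zero])))
    have hi : Function.Injective f := by
      have := (LinearMap.injective_iff_surjective
        (f := (f.hom.restrictScalars k))).mpr hs
      exact this
    exact ⟨hi, hs⟩
  -- every endomorphism is a scalar multiple of the identity
  have hscal : ∀ f : M ⟶ M, ∃ c : k, c • (𝟙 M) = f := by
    intro f
    set fk : (↥M) →ₗ[k] (↥M) := f.hom.restrictScalars k with hfk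
    obtain ⟨c, hc⟩ := Module.End.exists_eigenvalue fk
    obtain ⟨m, hm⟩ := hc.exists_hasEigenvector
    refine ⟨c, ?_⟩
    by_contra hne
    have h0 : f - c • (𝟙 M) ≠ 0 := by
      intro h
      apply hne
      rw [sub_eq_zero] at h
      exact h.symm
    have hb := hbij (f - c • (𝟙 M)) h0
    have hval : (f - c • (𝟙 M)) m = 0 := by
      show f m - (c • (𝟙 M)) m = 0
      have h1 : (c • (𝟙 M)) m = c • m := rfl
      have h2 : f m = c • m := hm.apply_eq_smul
      rw [h1, h2, sub_self]
    have : m = 0 := by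
      apply hb.1
      rw [hval, map_zero]
    exact hm.2 this
  -- conclude that End(M) is one-dimensional
  apply finrank_eq_one (𝟙 M)
  · intro h
    obtain ⟨m, hm⟩ := exists_ne (0 : ↥M)
    apply hm
    have : (𝟙 M) m = (0 : M ⟶ M) m := by rw [h]
    simpa using this
  · intro w
    exact hscal w
end

section
/- Let η : 0 → X →ι Y →π S → 0 be a short exact sequence of R-modules and (V, W) ∈ Gr(X) × Gr(S) a pair in the image of Ψ : U ↦ (ι⁻¹(U), π(U)). Then the fiber Ψ⁻¹((V,W)) is a torsor over Hom_R(W, X/V); in particular there is a bijection Ψ⁻¹((V,W)) ≅ Hom_R(W, X/V). -/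
/-!
STATEMENT 10: Let `η : 0 → X →ι Y →π S → 0` be a short exact sequence of `R`-modules and
`(V, W) ∈ Gr(X) × Gr(S)` a pair in the image of `Ψ : U ↦ (ι⁻¹(U), π(U))`. Then the fiber
`Ψ⁻¹((V,W))` is a torsor over `Hom_R(W, X/V)`; in particular there is a bijection
`Ψ⁻¹((V,W)) ≅ Hom_R(W, X/V)`.
-/

theorem fiber_of_psi_equiv_hom
    (k : Type) [Field k]
    (R : Type) [Ring R] [Algebra k R] [FiniteDimensional k R]
    (X Y S : Type)
    [AddCommGroup X] [Module R X] [Module.Finite R X]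
    [AddCommGroup Y] [Module R Y] [Module.Finite R Y]
    [AddCommGroup S] [Module R S] [Module.Finite R S]
    (ι : X →ₗ[R] Y) (π : Y →ₗ[R] S)
    (hι : Function.Injective ι) (hπ : Function.Surjective π)
    (hexact : LinearMap.range ι = LinearMap.ker π)
    (V : Submodule R X) (W : Submodule R S)
    -- (V, W) lies in the image of Ψ
    (hmem : ∃ U : Submodule R Y, U.comap ι = V ∧ U.map π = W) :
    Nonempty
      ({U : Submodule R Y // U.comap ι = V ∧ U.map π = W} ≃
        (W →ₗ[R] X ⧸ V)) := by
  classical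
  obtain ⟨U₀, hU₀V, hU₀W⟩ := hmem
  -- `J = ι(V)`, `q : Y → Y/J` the quotient map
  set J : Submodule R Y := V.map ι with hJdef
  have hJπ : J ≤ LinearMap.ker π := by
    rw [← hexact]
    rintro y ⟨x, -, rfl⟩
    exact ⟨x, rfl⟩
  set q : Y →ₗ[R] Y ⧸ J := J.mkQ with hqdef
  -- `π' : Y/J → S` induced by `π`
  set π' : (Y ⧸ J) →ₗ[R] S := J.liftQ π hJπ with hπ'def
  have hπ'q : ∀ y : Y, π' (q y) = π y := fun y => by
    simp [hπ'def, hqdef]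
  -- `ι' : X/V → Y/J` induced by `ι`
  have hVker : V ≤ LinearMap.ker (q.comp ι) := by
    intro x hx
    simp only [LinearMap.mem_ker, LinearMap.comp_apply, hqdef, Submodule.mkQ_apply,
      Submodule.Quotient.mk_eq_zero]
    exact ⟨x, hx, rfl⟩
  set ι' : (X ⧸ V) →ₗ[R] Y ⧸ J := V.liftQ (q.comp ι) hVker with hι'def
  have hι'mk : ∀ x : X, ι' (Submodule.Quotient.mk x) = q (ι x) := fun x => by
    simp [hι'def]
  have hι'inj : Function.Injective ι' := by
    intro a b hab
    obtain ⟨x, rfl⟩ := Submodule.Quotient.mk_surjective V a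
    obtain ⟨y, rfl⟩ := Submodule.Quotient.mk_surjective V b
    rw [hι'mk, hι'mk, hqdef, Submodule.mkQ_apply, Submodule.mkQ_apply,
      Submodule.Quotient.eq] at hab
    obtain ⟨v, hv, hveq⟩ := hab
    rw [← map_sub] at hveq
    have : v = x - y := hι hveq
    rw [Submodule.Quotient.eq]
    exact this ▸ hv
  have hπ'ι' : ∀ a : X ⧸ V, π' (ι' a) = 0 := by
    intro a
    obtain ⟨x, rfl⟩ := Submodule.Quotient.mk_surjective V a
    rw [hι'mk, hπ'q]
    have : ι x ∈ LinearMap.ker π := hexact ▸ LinearMap.mem_range_self ι x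
    exact this
  -- exactness of the induced sequence
  have hker' : LinearMap.ker π' = LinearMap.range ι' := by
    ext z
    obtain ⟨y, rfl⟩ := Submodule.Quotient.mk_surjective J z
    rw [← Submodule.mkQ_apply, ← hqdef]
    constructor
    · intro hz
      have hy : y ∈ LinearMap.ker π := by
        rw [LinearMap.mem_ker] at hz ⊢
        rw [hπ'q] at hz
        exact hz
      rw [← hexact] at hy
      obtain ⟨x, rfl⟩ := hy
      exact ⟨Submodule.Quotient.mk x, (hι'mk x).symm ▸ rfl⟩
    · rintro ⟨a, ha⟩
      obtain ⟨x, rfl⟩ := Submodule.Quotient.mk_surjective V a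
      rw [hι'mk] at ha
      rw [LinearMap.mem_ker, ← ha, hπ'q]
      have : ι x ∈ LinearMap.ker π := hexact ▸ LinearMap.mem_range_self ι x
      exact this
  -- basic facts about `q`
  have hqsurj : Function.Surjective q := Submodule.mkQ_surjective J
  have hqmemb : ∀ U : Submodule R Y, J ≤ U → (U.map q).comap q = U := by
    intro U hJU
    rw [Submodule.comap_map_eq, hqdef, Submodule.ker_mkQ, sup_eq_left.mpr hJU]
  have hmapcomap : ∀ A : Submodule R (Y ⧸ J), (A.comap q).map q = A := fun A =>
    Submodule.map_comap_eq_of_surjective hqsurj A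
  have hcompπ : π'.comp q = π := J.liftQ_mkQ π hJπ
  have hcompι : q.comp ι = ι'.comp V.mkQ := by
    ext x
    simp [hι'mk x]
  -- translating the fiber conditions through `q`
  have cond1 : ∀ U : Submodule R Y, U.comap ι = V → (U.map q).comap ι' = ⊥ := by
    intro U hUV
    have hJU : J ≤ U := Submodule.map_le_iff_le_comap.mpr (le_of_eq hUV.symm)
    ext a
    obtain ⟨x, rfl⟩ := Submodule.Quotient.mk_surjective V a
    rw [Submodule.mem_comap, hι'mk, Submodule.mem_bot]
    constructor
    · intro hx
      rw [← Submodule.mem_comap, hqmemb U hJU, ← Submodule.mem_comap, hUV] at hx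
      exact (Submodule.Quotient.mk_eq_zero V).mpr hx
    · intro h0
      have hxV : x ∈ V := (Submodule.Quotient.mk_eq_zero V).mp h0
      have : ι x ∈ U := by
        rw [← hUV] at hxV
        exact hxV
      exact Submodule.mem_map_of_mem this
  have cond2 : ∀ U : Submodule R Y, U.map π = W → (U.map q).map π' = W := by
    intro U hUW
    rw [← Submodule.map_comp, hcompπ, hUW]
  -- translating back through `q`
  have backmem : ∀ A : Submodule R (Y ⧸ J), A.comap ι' = ⊥ → A.map π' = W →
      (A.comap q).comap ι = V ∧ (A.comap q).map π = W := by
    intro A hb hw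
    constructor
    · rw [← Submodule.comap_comp, hcompι, Submodule.comap_comp, hb, Submodule.comap_bot,
        Submodule.ker_mkQ]
    · rw [← hcompπ, Submodule.map_comp, hmapcomap, hw]
  -- splittings from fiber elements
  have key : ∀ Ub : Submodule R (Y ⧸ J), Ub.comap ι' = ⊥ → Ub.map π' = W →
      ∃ s : W →ₗ[R] Y ⧸ J, (∀ w : W, π' (s w) = (w : S)) ∧ LinearMap.range s = Ub := by
    intro Ub hb hw
    have hle : ∀ u ∈ Ub, π' u ∈ W := fun u hu => hw ▸ Submodule.mem_map_of_mem hu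
    have hbij : Function.Bijective (π'.restrict hle) := by
      constructor
      · intro u v huv
        have h1 : π' (u : Y ⧸ J) = π' (v : Y ⧸ J) := by
          have := congrArg Subtype.val huv
          simpa [LinearMap.restrict_apply] using this
        have h2 : (u : Y ⧸ J) - v ∈ LinearMap.range ι' := by
          rw [← hker', LinearMap.mem_ker, map_sub, h1, sub_self]
        obtain ⟨a, ha⟩ := h2
        have haU : a ∈ Ub.comap ι' := by
          rw [Submodule.mem_comap, ha]
          exact Submodule.sub_mem _ u.2 v.2
        rw [hb, Submodule.mem_bot] at haU
        have : (u : Y ⧸ J) - v = 0 := by rw [← ha, haU, map_zero]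
        exact Subtype.ext (sub_eq_zero.mp this)
      · intro w
        have hwm : (w : S) ∈ Ub.map π' := hw.symm ▸ w.2
        obtain ⟨u, hu, hπu⟩ := hwm
        exact ⟨⟨u, hu⟩, Subtype.ext (by simpa [LinearMap.restrict_apply] using hπu)⟩
    refine ⟨Ub.subtype.comp ((LinearEquiv.ofBijective (π'.restrict hle) hbij).symm :
        W →ₗ[R] Ub), fun w => ?_, ?_⟩
    · simp only [LinearMap.comp_apply, Submodule.subtype_apply, LinearEquiv.coe_coe]
      rw [← LinearMap.restrict_coe_apply π' hle, LinearEquiv.apply_ofBijective_symm_apply]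
    · rw [LinearMap.range_comp]
      have h3 : LinearMap.range ((LinearEquiv.ofBijective (π'.restrict hle) hbij).symm :
          W →ₗ[R] Ub) = ⊤ := LinearEquiv.range _
      rw [h3, Submodule.map_top, Submodule.range_subtype]
  -- the base splitting coming from `U₀`
  obtain ⟨s₀, hs₀, -⟩ := key (U₀.map q) (cond1 U₀ hU₀V) (cond2 U₀ hU₀W)
  -- splittings satisfy the fiber' conditions
  have condS : ∀ s : W →ₗ[R] Y ⧸ J, (∀ w : W, π' (s w) = (w : S)) →
      (LinearMap.range s).comap ι' = ⊥ ∧ (LinearMap.range s).map π' = W := by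
    intro s hs
    constructor
    · ext a
      rw [Submodule.mem_comap, LinearMap.mem_range, Submodule.mem_bot]
      constructor
      · rintro ⟨w, hwa⟩
        have hw0 : (w : S) = 0 := by
          rw [← hs w, hwa, hπ'ι']
        have : w = 0 := Subtype.ext hw0
        apply hι'inj
        rw [← hwa, this, map_zero, map_zero]
      · rintro rfl
        exact ⟨0, by simp⟩
    · ext w'
      rw [Submodule.mem_map]
      constructor
      · rintro ⟨u, ⟨w, rfl⟩, rfl⟩
        rw [hs w]
        exact w.2
      · intro hw'
        exact ⟨s ⟨w', hw'⟩, ⟨⟨w', hw'⟩, rfl⟩, hs ⟨w', hw'⟩⟩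
  have hsgen : ∀ (g : W →ₗ[R] X ⧸ V) (w : W), π' ((s₀ + ι'.comp g) w) = (w : S) := by
    intro g w
    simp [hs₀ w, hπ'ι']
  have ΦFib : ∀ g : W →ₗ[R] X ⧸ V,
      ((LinearMap.range (s₀ + ι'.comp g)).comap q).comap ι = V ∧
      ((LinearMap.range (s₀ + ι'.comp g)).comap q).map π = W := by
    intro g
    obtain ⟨h1, h2⟩ := condS _ (hsgen g)
    exact backmem _ h1 h2
  set Φ : (W →ₗ[R] X ⧸ V) → {U : Submodule R Y // U.comap ι = V ∧ U.map π = W} :=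
    fun g => ⟨(LinearMap.range (s₀ + ι'.comp g)).comap q, ΦFib g⟩ with hΦdef
  have hΦinj : Function.Injective Φ := by
    intro g g' h
    have h' : LinearMap.range (s₀ + ι'.comp g) = LinearMap.range (s₀ + ι'.comp g') := by
      have h2 := congrArg (fun U : {U : Submodule R Y // U.comap ι = V ∧ U.map π = W} =>
        (U.1.map q)) h
      simpa [hΦdef, hmapcomap] using h2
    ext w
    have hmem1 : (s₀ + ι'.comp g) w ∈ LinearMap.range (s₀ + ι'.comp g') := by
      rw [← h']
      exact LinearMap.mem_range_self _ w
    obtain ⟨w', hw'⟩ := hmem1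
    have hww' : (w' : S) = (w : S) := by
      rw [← hsgen g' w', hw', hsgen g w]
    have hww : w' = w := Subtype.ext hww'
    rw [hww] at hw'
    simp only [LinearMap.add_apply, LinearMap.comp_apply] at hw'
    have := add_left_cancel hw'
    exact hι'inj this.symm
  have hΦsurj : Function.Surjective Φ := by
    rintro ⟨U, hUV, hUW⟩
    have hJU : J ≤ U := Submodule.map_le_iff_le_comap.mpr (le_of_eq hUV.symm)
    obtain ⟨s, hs, hrange⟩ := key (U.map q) (cond1 U hUV) (cond2 U hUW)
    have hsub : ∀ w : W, (s - s₀) w ∈ LinearMap.range ι' := by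
      intro w
      rw [← hker', LinearMap.mem_ker]
      simp [hs w, hs₀ w]
    set eA := LinearEquiv.ofInjective ι' hι'inj with heA
    set g : W →ₗ[R] X ⧸ V :=
      (eA.symm : LinearMap.range ι' →ₗ[R] X ⧸ V).comp
        ((s - s₀).codRestrict (LinearMap.range ι') hsub) with hg
    refine ⟨g, ?_⟩
    have hsg : s₀ + ι'.comp g = s := by
      ext w
      have h1 : ι' (g w) = s w - s₀ w := by
        have h2 : ι' (eA.symm ((s - s₀).codRestrict (LinearMap.range ι') hsub w)) =
            (((s - s₀).codRestrict (LinearMap.range ι') hsub w : LinearMap.range ι') : Y ⧸ J) := by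
          rw [heA]
          exact LinearEquiv.ofInjective_symm_apply (f := ι') (h := hι'inj) _
        rw [hg]
        simp only [LinearMap.comp_apply, LinearEquiv.coe_coe]
        rw [h2]
        simp
      simp only [LinearMap.add_apply, LinearMap.comp_apply, h1]
      abel
    apply Subtype.ext
    simp only [hΦdef]
    rw [hsg, hrange, hqmemb U hJU]
  exact ⟨(Equiv.ofBijective Φ ⟨hΦinj, hΦsurj⟩).symm⟩
end

section
/- Let Q be a finite acyclic quiver, S, X finite-dimensional representations with dim Ext¹(S,X) = 1 and X not injective, and f : X → τS a nonzero morphism (τ the Auslander–Reiten translation). Then for any subrepresentation M ⊆ X, dim Ext¹(S, X/M) = 1 if and only if M ⊆ ker f. Consequently X_S := max{ M ⊆ X : dim Ext¹(S, X/M) = 1 } equals ker f. -/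
/-!
STATEMENT 11: Let `Q` be a finite acyclic quiver, `S, X` finite-dimensional representations
with `dim Ext¹(S,X) = 1`, `X` not injective, and `f : X → τS` a nonzero morphism (`τ` the
Auslander–Reiten translation). Then for any subrepresentation `M ⊆ X`,
`dim Ext¹(S, X/M) = 1` if and only if `M ⊆ ker f`. Consequently
`X_S := max{ M ⊆ X : dim Ext¹(S, X/M) = 1 }` equals `ker f`.

We work with modules over the path algebra, abstracted as a finite-dimensional algebra `A`;
the module `T` plays the role of `τS`, characterized by the Auslander–Reiten formula
`dim Ext¹(S, X/M) = dim Hom(X/M, τS)` for all submodules `M ⊆ X` (an assumption which, for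
the hereditary algebra `A = kQ` with `X` not injective, is the AR duality).
-/

open CategoryTheory

set_option maxHeartbeats 1000000 in
theorem ext_dim_one_iff_le_ker_of_AR
    (k : Type) [Field k] [IsAlgClosed k]
    (A : Type) [Ring A] [Algebra k A] [FiniteDimensional k A]
    (S X T : Type)
    [AddCommGroup S] [Module A S] [Module.Finite A S]
    [AddCommGroup X] [Module A X] [Module.Finite A X]
    [AddCommGroup T] [Module A T] [Module.Finite A T]
    -- `X` is not an injective module
    (hX_not_inj : ¬ Module.Injective A X)
    -- the Auslander–Reiten formula: Ext¹(S, X/M)^∨ ≅ Hom(X/M, τS) for all M ⊆ X,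
    -- where T = τS
    (hAR : ∀ M : Submodule A X,
      Module.finrank k (((Ext k (ModuleCat.{0} A) 1).obj
        (Opposite.op (ModuleCat.of A S))).obj (ModuleCat.of A (X ⧸ M))) =
      Module.finrank k (ModuleCat.of A (X ⧸ M) ⟶ ModuleCat.of A T))
    -- dim Ext¹(S, X) = 1
    (hdim : Module.finrank k (((Ext k (ModuleCat.{0} A) 1).obj
      (Opposite.op (ModuleCat.of A S))).obj (ModuleCat.of A X)) = 1)
    (f : X →ₗ[A] T) (hf : f ≠ 0) :
    (∀ M : Submodule A X,
      Module.finrank k (((Ext k (ModuleCat.{0} A) 1).obj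
        (Opposite.op (ModuleCat.of A S))).obj (ModuleCat.of A (X ⧸ M))) = 1 ↔
      M ≤ LinearMap.ker f) ∧
    IsGreatest {M : Submodule A X |
      Module.finrank k (((Ext k (ModuleCat.{0} A) 1).obj
        (Opposite.op (ModuleCat.of A S))).obj (ModuleCat.of A (X ⧸ M))) = 1}
      (LinearMap.ker f) := by
  have key : ∀ M : Submodule A X,
      Module.finrank k (((Ext k (ModuleCat.{0} A) 1).obj
        (Opposite.op (ModuleCat.of A S))).obj (ModuleCat.of A (X ⧸ M))) = 1 ↔
      M ≤ LinearMap.ker f := by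
    -- Step 1: `dim Hom(X, T) = 1`.
    have hHomX : Module.finrank k (ModuleCat.of A X ⟶ ModuleCat.of A T) = 1 := by
      have e1 : (ModuleCat.of A (X ⧸ (⊥ : Submodule A X)) ⟶ ModuleCat.of A T) ≃ₗ[k]
          (ModuleCat.of A X ⟶ ModuleCat.of A T) :=
        Linear.homCongr k
          ((Submodule.quotEquivOfEqBot (⊥ : Submodule A X) rfl).toModuleIso)
          (Iso.refl (ModuleCat.of A T))
      have e3 : Module.finrank k (((Ext k (ModuleCat.{0} A) 1).obj
          (Opposite.op (ModuleCat.of A S))).obj (ModuleCat.of A (X ⧸ (⊥ : Submodule A X)))) =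
          Module.finrank k (((Ext k (ModuleCat.{0} A) 1).obj
          (Opposite.op (ModuleCat.of A S))).obj (ModuleCat.of A X)) :=
        LinearEquiv.finrank_eq
          (((Ext k (ModuleCat.{0} A) 1).obj (Opposite.op (ModuleCat.of A S))).mapIso
            ((Submodule.quotEquivOfEqBot (⊥ : Submodule A X) rfl).toModuleIso)).toLinearEquiv
      rw [← LinearEquiv.finrank_eq e1, ← hAR ⊥, e3, hdim]
    haveI hfd : FiniteDimensional k (ModuleCat.of A X ⟶ ModuleCat.of A T) :=
      FiniteDimensional.of_finrank_pos (by rw [hHomX]; exact one_pos)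
    intro M
    haveI hepi : Epi (ModuleCat.ofHom M.mkQ) :=
      (ModuleCat.epi_iff_surjective _).mpr (Submodule.mkQ_surjective M)
    set Φ : (ModuleCat.of A (X ⧸ M) ⟶ ModuleCat.of A T) →ₗ[k]
        (ModuleCat.of A X ⟶ ModuleCat.of A T) :=
      Linear.leftComp k (ModuleCat.of A T) (ModuleCat.ofHom M.mkQ) with hΦ
    have hΦinj : Function.Injective Φ := fun g h H =>
      (cancel_epi (ModuleCat.ofHom M.mkQ)).mp (by simpa [hΦ] using H)
    haveI hfdq : FiniteDimensional k (ModuleCat.of A (X ⧸ M) ⟶ ModuleCat.of A T) :=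
      FiniteDimensional.of_injective Φ hΦinj
    have hle : Module.finrank k (ModuleCat.of A (X ⧸ M) ⟶ ModuleCat.of A T) ≤ 1 := by
      rw [← hHomX]
      exact LinearMap.finrank_le_finrank_of_injective hΦinj
    rw [hAR M]
    constructor
    · intro h1
      have hpos : 0 < Module.finrank k (ModuleCat.of A (X ⧸ M) ⟶ ModuleCat.of A T) := by omega
      haveI : Nontrivial (ModuleCat.of A (X ⧸ M) ⟶ ModuleCat.of A T) :=
        Module.finrank_pos_iff.mp hpos
      obtain ⟨g, hg⟩ := exists_ne (0 : ModuleCat.of A (X ⧸ M) ⟶ ModuleCat.of A T)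
      have hΦg : Φ g ≠ 0 := fun h0 => hg (hΦinj (by simpa using h0))
      have hspan : Submodule.span k {Φ g} = ⊤ :=
        Submodule.eq_top_of_finrank_eq (by rw [finrank_span_singleton hΦg, hHomX])
      have hfmem : (ModuleCat.ofHom f : ModuleCat.of A X ⟶ ModuleCat.of A T)
          ∈ Submodule.span k {Φ g} := hspan ▸ Submodule.mem_top
      obtain ⟨c, hc⟩ := Submodule.mem_span_singleton.mp hfmem
      have hc' : Φ (c • g) = (ModuleCat.ofHom f : ModuleCat.of A X ⟶ ModuleCat.of A T) := by
        rw [map_smul, hc]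
      intro x hx
      rw [LinearMap.mem_ker]
      have h2 := congrArg (fun φ => φ.hom x) hc'
      have h3 : (Φ (c • g)) x = (c • g) (M.mkQ x) := rfl
      have h4 : (c • g) (M.mkQ x) = 0 := by
        rw [Submodule.mkQ_apply, (Submodule.Quotient.mk_eq_zero M).mpr hx, map_zero]
      exact h2.symm.trans (h3.trans h4)
    · intro hM
      have hg : (ModuleCat.ofHom (M.liftQ f hM) :
          ModuleCat.of A (X ⧸ M) ⟶ ModuleCat.of A T) ≠ 0 := by
        intro h0
        apply hf
        rw [← M.liftQ_mkQ f hM]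
        have h0' : M.liftQ f hM = 0 := congrArg ModuleCat.Hom.hom h0
        rw [h0', LinearMap.zero_comp]
      haveI hnt : Nontrivial (ModuleCat.of A (X ⧸ M) ⟶ ModuleCat.of A T) :=
        nontrivial_of_ne _ 0 hg
      have hpos : 0 < Module.finrank k (ModuleCat.of A (X ⧸ M) ⟶ ModuleCat.of A T) :=
        Module.finrank_pos_iff.mpr hnt
      omega
  exact ⟨key, ⟨(key _).mpr le_rfl, fun M hM => (key M).mp hM⟩⟩
end

section
/- Let Q be a finite quiver and d ≥ 1. The canonical functor Φ : rep(Q) → Mod(R_d), defined by placing X_i at each vertex (i,r), identity maps on vertical arrows (i,r) → (i,r+1), and X_{i→j} on horizontal arrows, is exact and fully faithful. -/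
open CategoryTheory Quiver

/-- Vertices of the extended quiver `Q_d`: pairs `(i, r)` with `i` a vertex of `Q`
and `r ∈ {1, …, d}`. -/
structure ExtVertex (V : Type) (d : ℕ) where
  v : V
  r : Fin d

/-- Arrows of the extended quiver `Q_d`: vertical arrows `(i,r) → (i,r+1)` and
horizontal arrows `(i,r) → (j,r)` for each arrow `i → j` of `Q`. -/
inductive ExtArrow (V : Type) [Quiver.{0} V] (d : ℕ) :
    ExtVertex V d → ExtVertex V d → Type
  | vert (i : V) (r : Fin d) (h : r.val + 1 < d) :
      ExtArrow V d ⟨i, r⟩ ⟨i, ⟨r.val + 1, h⟩⟩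
  | horiz {i j : V} (a : i ⟶ j) (r : Fin d) : ExtArrow V d ⟨i, r⟩ ⟨j, r⟩

instance (V : Type) [Quiver.{0} V] (d : ℕ) : Quiver (ExtVertex V d) := ⟨ExtArrow V d⟩

/-- The commutativity relations of the extended quiver: the two paths around each
square are identified. -/
inductive commRel (V : Type) [Quiver.{0} V] (d : ℕ) :
    ∀ (x y : Paths (ExtVertex V d)), (x ⟶ y) → (x ⟶ y) → Prop
  | sq {i j : V} (a : i ⟶ j) (r : Fin d) (h : r.val + 1 < d) :
      commRel V d ⟨i, r⟩ ⟨j, ⟨r.val + 1, h⟩⟩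
        (Quiver.Hom.toPath (ExtArrow.horiz a r) ≫
          Quiver.Hom.toPath (ExtArrow.vert j r h))
        (Quiver.Hom.toPath (ExtArrow.vert i r h) ≫
          Quiver.Hom.toPath (ExtArrow.horiz a ⟨r.val + 1, h⟩))

/-- The category corresponding to the bounded quiver algebra `R_d = KQ_d/I`. -/
def ExtCat (V : Type) [Quiver.{0} V] (d : ℕ) :=
  CategoryTheory.Quotient (fun x y => commRel V d x y)

noncomputable instance (V : Type) [Quiver.{0} V] (d : ℕ) : Category (ExtCat V d) := by
  unfold ExtCat; exact CategoryTheory.Quotient.category _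

/-- The image of an arrow of `Q_d` in the path category of `Q`. -/
def projMap {V : Type} [Quiver.{0} V] {d : ℕ} :
    ∀ {x y : ExtVertex V d}, ExtArrow V d x y →
      (((Paths.of V).obj x.v : Paths V) ⟶ (Paths.of V).obj y.v)
  | _, _, .vert _ _ _ => 𝟙 _
  | _, _, .horiz a _ => Quiver.Hom.toPath a

/-- The projection prefunctor `Q_d ⥤q Paths Q`. -/
def projPre (V : Type) [Quiver.{0} V] (d : ℕ) : ExtVertex V d ⥤q Paths V where
  obj x := (Paths.of V).obj x.v
  map f := projMap f

/-- The projection functor `ExtCat V d ⥤ Paths V`. -/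
noncomputable def projFunctor (V : Type) [Quiver.{0} V] (d : ℕ) :
    ExtCat V d ⥤ Paths V :=
  CategoryTheory.Quotient.lift _ (Paths.lift (projPre V d)) (by
    intro x y f g h
    cases h with
    | @sq i j a r hr =>
      first
        | (erw [Functor.map_comp, Functor.map_comp, Paths.lift_toPath, Paths.lift_toPath,
            Paths.lift_toPath, Paths.lift_toPath]
           change Quiver.Hom.toPath a ≫ 𝟙 ((Paths.of V).obj j) = 𝟙 ((Paths.of V).obj i) ≫ Quiver.Hom.toPath a
           simp)
        | rfl)

/-- The canonical functor `Φ : rep(Q) ⥤ Mod(R_d)`, given by precomposition with the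
projection functor. -/
noncomputable def Phi (k : Type) [Field k] (V : Type) [Quiver.{0} V] (d : ℕ) :
    (Paths V ⥤ ModuleCat.{0} k) ⥤ (ExtCat V d ⥤ ModuleCat.{0} k) :=
  (Functor.whiskeringLeft _ _ _).obj (projFunctor V d)

/-!
STATEMENT 15: Let `Q` be a finite quiver and `d ≥ 1`. The canonical functor
`Φ : rep(Q) → Mod(R_d)` (placing `X_i` at each vertex `(i,r)`, identities on vertical
arrows and `X_{i→j}` on horizontal arrows; here realized as precomposition with the
projection functor `ExtCat V d ⥤ Paths V`) is exact and fully faithful.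
-/


section Aux

variable {k : Type} [Field k] {V : Type} [Quiver.{0} V] {d : ℕ}

lemma map_quot_eq (Z : Paths V ⥤ ModuleCat.{0} k) {x y : ExtVertex V d}
    (f : ExtArrow V d x y) :
    ((Phi k V d).obj Z).map ((Quotient.functor _).map (Quiver.Hom.toPath f)) =
      Z.map (projMap f) := by
  have h : ((Paths.lift (projPre V d)).map (Quiver.Hom.toPath f) :
      ((Paths.of V).obj x.v : Paths V) ⟶ (Paths.of V).obj y.v) = projMap f := by
    rw [Paths.lift_toPath]; rfl
  exact congrArg (fun g => Z.map g) h

lemma app_succ {X Y : Paths V ⥤ ModuleCat.{0} k}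
    (α : (Phi k V d).obj X ⟶ (Phi k V d).obj Y) (i : V)
    (n : ℕ) (hr : n + 1 < d) (hn : n < d) :
    α.app ⟨⟨i, ⟨n + 1, hr⟩⟩⟩ = α.app ⟨⟨i, ⟨n, hn⟩⟩⟩ := by
  have nat := α.naturality
    ((Quotient.functor _).map (Quiver.Hom.toPath (ExtArrow.vert i ⟨n, hn⟩ hr)))
  rw [map_quot_eq X, map_quot_eq Y] at nat
  rw [show projMap (V := V) (d := d) (ExtArrow.vert i ⟨n, hn⟩ hr) = 𝟙 _ from rfl,
    X.map_id, Y.map_id] at nat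
  exact (Category.id_comp (α.app _)).symm.trans (nat.trans (Category.comp_id (α.app _)))

lemma app_eq_zero {X Y : Paths V ⥤ ModuleCat.{0} k}
    (α : (Phi k V d).obj X ⟶ (Phi k V d).obj Y) (i : V) (hd : 0 < d) :
    ∀ (r : ℕ) (hr : r < d), α.app ⟨⟨i, ⟨r, hr⟩⟩⟩ = α.app ⟨⟨i, ⟨0, hd⟩⟩⟩ := by
  intro r
  induction r with
  | zero => intro hr; rfl
  | succ n ih =>
    intro hr
    have hn : n < d := Nat.lt_of_succ_lt hr
    rw [app_succ α i n hr hn, ih hn]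

lemma arrow_nat {X Y : Paths V ⥤ ModuleCat.{0} k}
    (α : (Phi k V d).obj X ⟶ (Phi k V d).obj Y) {i j : V} (a : i ⟶ j) (r : Fin d) :
    X.map (Quiver.Hom.toPath a) ≫ α.app ⟨⟨j, r⟩⟩ =
      α.app ⟨⟨i, r⟩⟩ ≫ Y.map (Quiver.Hom.toPath a) := by
  have nat := α.naturality
    ((Quotient.functor _).map (Quiver.Hom.toPath (ExtArrow.horiz a r)))
  rw [map_quot_eq X, map_quot_eq Y] at nat
  exact nat

end Aux

theorem Phi_exact_and_fully_faithful
    (k : Type) [Field k] (V : Type) [Quiver.{0} V] [Fintype V]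
    [∀ i j : V, Fintype (i ⟶ j)]
    (d : ℕ) (hd : 1 ≤ d) :
    Nonempty (Limits.PreservesFiniteLimits (Phi k V d)) ∧
    Nonempty (Limits.PreservesFiniteColimits (Phi k V d)) ∧
    (Phi k V d).Full ∧ (Phi k V d).Faithful := by
  have hd0 : 0 < d := hd
  refine ⟨⟨⟨fun J _ _ => inferInstanceAs (Limits.PreservesLimitsOfShape J
      ((Functor.whiskeringLeft _ _ _).obj (projFunctor V d)))⟩⟩,
    ⟨⟨fun J _ _ => inferInstanceAs (Limits.PreservesColimitsOfShape J
      ((Functor.whiskeringLeft _ _ _).obj (projFunctor V d)))⟩⟩, ?_, ?_⟩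
  · constructor
    intro X Y α
    refine ⟨⟨fun i => α.app ⟨⟨i, ⟨0, hd0⟩⟩⟩, ?_⟩, ?_⟩
    · intro i j f
      induction f using Paths.induction_fixed_source with
      | id =>
        rw [X.map_id, Y.map_id]
        exact (Category.id_comp (α.app _)).trans (Category.comp_id (α.app _)).symm
      | @comp u v p q hp =>
        erw [X.map_comp, Y.map_comp, Category.assoc, arrow_nat α q ⟨0, hd0⟩,
          ← Category.assoc, hp, Category.assoc]
    · apply NatTrans.ext
      funext x
      obtain ⟨⟨i, ⟨r, hr⟩⟩⟩ := x
      exact (app_eq_zero α i hd0 r hr).symm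
  · constructor
    intro X Y β β' h
    apply NatTrans.ext
    funext i
    exact congrArg (fun γ => γ.app ⟨⟨i, ⟨0, hd0⟩⟩⟩) h
end
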